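/- arXiv:2204.03022 — 8 statements merged into one kernel-verified Lean document; each statement's English description precedes it below -/
import Mathlib

section
/- Under relational composition on X one has P·P = 1, L·L = 1, and L·P·L = P·L·P, where 1 denotes the identity (diagonal) relation on X. -/
namespace CubeDance

/-- The set `X` of the 12 major triads, 12 minor triads, and 4 augmented triads. -/
inductive Triad : Type
  | maj : ZMod 12 → Triad
  | min : ZMod 12 → Triad
  | aug : ZMod 4 → Triad
  deriving DecidableEq

/-- Binary relations on `X`. -/
abbrev RelM : Type := Triad → Triad → Prop

/-- Binary relations on `X` form a monoid under relational composition,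
with identity the diagonal relation. -/
instance : Monoid RelM where
  mul R S := fun p q => ∃ r, R p r ∧ S r q
  one := fun p q => p = q
  mul_assoc R S T := by
    funext p q
    apply propext
    constructor
    · rintro ⟨r, ⟨s, h1, h2⟩, h3⟩
      exact ⟨s, h1, r, h2, h3⟩
    · rintro ⟨s, h1, r, h2, h3⟩
      exact ⟨r, ⟨s, h1, h2⟩, h3⟩
  one_mul R := by
    funext p q
    apply propext
    constructor
    · rintro ⟨r, rfl, h⟩
      exact h
    · intro h
      exact ⟨p, rfl, h⟩
  mul_one R := by
    funext p q
    apply propext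
    constructor
    · rintro ⟨r, h, rfl⟩
      exact h
    · intro h
      exact ⟨q, h, rfl⟩

/-- The relation `U`, relating `a_aug` with `x_M` whenever `x ≡ a (mod 4)` and
`a_aug` with `x_m` whenever `x ≡ a + 1 (mod 4)`. -/
def U : RelM := fun p q =>
  match p, q with
  | .aug a, .maj x => (x.val : ZMod 4) = a
  | .maj x, .aug a => (x.val : ZMod 4) = a
  | .aug a, .min x => (x.val : ZMod 4) = a + 1
  | .min x, .aug a => (x.val : ZMod 4) = a + 1
  | _, _ => False

/-- The relation `P`, relating `x_M` with `x_m`, and each augmented triad with itself. -/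
def P : RelM := fun p q =>
  match p, q with
  | .maj x, .min y => x = y
  | .min x, .maj y => x = y
  | .aug a, .aug b => a = b
  | _, _ => False

/-- The relation `L`, relating `x_M` with `(x+4)_m`, and each augmented triad with itself. -/
def L : RelM := fun p q =>
  match p, q with
  | .maj x, .min y => y = x + 4
  | .min y, .maj x => y = x + 4
  | .aug a, .aug b => a = b
  | _, _ => False

/-- The monoid `M_{U,P,L}` generated by the relations `U`, `P` and `L`. -/
def M : Submonoid RelM := Submonoid.closure {U, P, L}

lemma U_mem : U ∈ M := Submonoid.subset_closure (Set.mem_insert _ _)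

lemma P_mem : P ∈ M :=
  Submonoid.subset_closure (Set.mem_insert_of_mem _ (Set.mem_insert _ _))

lemma L_mem : L ∈ M :=
  Submonoid.subset_closure (Set.mem_insert_of_mem _ (Set.mem_insert_of_mem _ rfl))

/-! P and L are graphs of involutions of X, and composing graphs composes the maps, so the
relations become identities between maps. Both sides of the braid relation send `x_M` to a minor
triad, `(x + 8)_m` and `(x - 4)_m` respectively, which agree because `12 = 0` in `ZMod 12`. -/

def graphRel (f : Triad → Triad) : RelM := fun p q => f p = q

lemma graphRel_mul (f g : Triad → Triad) : graphRel f * graphRel g = graphRel (g ∘ f) := by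
  funext p q
  exact propext ⟨fun ⟨_, rfl, hg⟩ => hg, fun h => ⟨f p, rfl, h⟩⟩

lemma graphRel_id : graphRel id = 1 := rfl

def parallel : Triad → Triad
  | .maj x => .min x
  | .min x => .maj x
  | .aug a => .aug a

def leadingTone : Triad → Triad
  | .maj x => .min (x + 4)
  | .min x => .maj (x - 4)
  | .aug a => .aug a

lemma parallel_involutive : Function.Involutive parallel := by
  rintro (x | x | a) <;> rfl

lemma leadingTone_involutive : Function.Involutive leadingTone := by
  rintro (x | x | a) <;> simp [leadingTone]

lemma P_eq_graphRel : P = graphRel parallel := by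
  funext p q
  cases p <;> cases q <;> simp [P, graphRel, parallel]

lemma L_eq_graphRel : L = graphRel leadingTone := by
  funext p q
  cases p <;> cases q <;> simp [L, graphRel, leadingTone, eq_sub_iff_add_eq, eq_comm]

lemma leadingTone_parallel_braid :
    leadingTone ∘ parallel ∘ leadingTone = parallel ∘ leadingTone ∘ parallel := by
  have h12 : (12 : ZMod 12) = 0 := by decide
  funext t
  rcases t with x | x | a
  · exact congrArg Triad.min (by linear_combination h12 : x + 4 + 4 = x - 4)
  · exact congrArg Triad.maj (by linear_combination -h12 : x - 4 - 4 = x + 4)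
  · rfl

/-- `P·P = 1`, `L·L = 1`, and `L·P·L = P·L·P`. -/
theorem PL_relations : P * P = 1 ∧ L * L = 1 ∧ L * P * L = P * L * P := by
  simp only [P_eq_graphRel, L_eq_graphRel, graphRel_mul]
  refine ⟨?_, ?_, ?_⟩
  · rw [parallel_involutive.comp_self, graphRel_id]
  · rw [leadingTone_involutive.comp_self, graphRel_id]
  · rw [leadingTone_parallel_braid]

end CubeDance
end

section
/- Under relational composition on X one has U·U·U = U. -/
/-!
Every major or minor triad has exactly one `U`-neighbour, an augmented triad, so `U` is a disjoint
union of stars `K_{1,6}`. Such a relation is symmetric and difunctional (`R a b`, `R c b`, `R c d`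
imply `R a d`), and for any difunctional `R` one has `R · R° · R = R`.
-/

namespace Relation

variable {α β : Type*} {r : α → β → Prop}

theorem comp_flip_comp_of_difunctional
    (hr : ∀ a b c d, r a b → r c b → r c d → r a d) :
    Comp (Comp r (flip r)) r = r := by
  funext a d
  apply propext
  constructor
  · rintro ⟨c, ⟨b, hab, hcb⟩, hcd⟩
    exact hr a b c d hab hcb hcd
  · intro had
    exact ⟨a, ⟨d, had, had⟩, had⟩

end Relation

namespace CubeDance

def Triad.IsAug : Triad → Prop
  | .aug _ => True
  | _ => False

lemma U_symm {p q : Triad} (h : U p q) : U q p := by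
  cases p <;> cases q <;> simp_all [U]

lemma flip_U : flip U = U := by
  funext p q
  exact propext ⟨U_symm, U_symm⟩

lemma U_isAug_iff {p q : Triad} (h : U p q) : p.IsAug ↔ ¬ q.IsAug := by
  cases p <;> cases q <;> simp_all [U, Triad.IsAug]

lemma U_left_unique {p p' q : Triad} (hq : ¬ q.IsAug) (h : U p q) (h' : U p' q) : p = p' := by
  cases p <;> cases p' <;> cases q <;> simp_all [U, Triad.IsAug]

lemma U_difunctional (p q s r : Triad) (hpq : U p q) (hsq : U s q) (hsr : U s r) : U p r := by
  by_cases hq : q.IsAug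
  · have hs : ¬ s.IsAug := fun hs => (U_isAug_iff hsq).1 hs hq
    have hrq : r = q := U_left_unique hs (U_symm hsr) (U_symm hsq)
    exact hrq ▸ hpq
  · exact U_left_unique hq hpq hsq ▸ hsr

/-- `U·U·U = U`. -/
theorem U_cubed : U * U * U = U := by
  have h := Relation.comp_flip_comp_of_difunctional U_difunctional
  rwa [flip_U] at h

end CubeDance
end

section
/- Under relational composition on X one has U·P = U·L and P·U = L·U. -/
/-! Relating `p` to `q` by `L` is relating `p` by `P` to the triad obtained from `q` by moving a
major triad up, or a minor triad down, a major third. That move preserves roots mod 4, which is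
all `U` sees, so it is absorbed by `U`: `L·U = P·U`. As `P`, `L` and `U` are symmetric, transposing
gives `U·P = U·L`. -/

theorem Relation.comp_eq_comp_of_surjective {α β γ : Type*} {R S : α → β → Prop}
    {T : β → γ → Prop} (f : β → β) (hf : Function.Surjective f)
    (hRS : ∀ a b, R a b ↔ S a (f b)) (hT : ∀ b c, T (f b) c ↔ T b c) :
    Relation.Comp R T = Relation.Comp S T := by
  funext a c
  apply propext
  constructor
  · rintro ⟨b, hab, hbc⟩
    exact ⟨f b, (hRS a b).1 hab, (hT b c).2 hbc⟩
  · rintro ⟨b', hab, hbc⟩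
    obtain ⟨b, rfl⟩ := hf b'
    exact ⟨b, (hRS a b).2 hab, (hT b c).1 hbc⟩

theorem ZMod.natCast_val_add_of_dvd {m n : ℕ} [NeZero n] (h : m ∣ n) (x y : ZMod n) :
    ((x + y).val : ZMod m) = x.val + y.val := by
  simp only [ZMod.natCast_val, ZMod.cast_add h]

namespace CubeDance

lemma mul_eq_comp (R S : RelM) : R * S = Relation.Comp R S := rfl

instance : Std.Symm U := ⟨by rintro (_ | _ | _) (_ | _ | _) h <;> exact h⟩

instance : Std.Symm P := ⟨by rintro (_ | _ | _) (_ | _ | _) h <;> simp_all [P]⟩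

instance : Std.Symm L := ⟨by rintro (_ | _ | _) (_ | _ | _) h <;> simp_all [L]⟩

def Triad.shiftThird : Triad → Triad
  | .maj x => .maj (x + 4)
  | .min y => .min (y - 4)
  | .aug a => .aug a

lemma Triad.shiftThird_surjective : Function.Surjective Triad.shiftThird := by
  rintro (x | y | a)
  · exact ⟨.maj (x - 4), congrArg Triad.maj (sub_add_cancel x 4)⟩
  · exact ⟨.min (y + 4), congrArg Triad.min (add_sub_cancel_right y 4)⟩
  · exact ⟨.aug a, rfl⟩

lemma L_iff_P_shiftThird (p q : Triad) : L p q ↔ P p q.shiftThird := by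
  rcases p with (_ | _ | _) <;> rcases q with (_ | _ | _) <;>
    simp only [L, P, Triad.shiftThird]
  rw [eq_sub_iff_add_eq, eq_comm]

lemma U_shiftThird_iff (r q : Triad) : U r.shiftThird q ↔ U r q := by
  have h4 (x : ZMod 12) : ((x + 4).val : ZMod 4) = x.val := by
    rw [ZMod.natCast_val_add_of_dvd (by norm_num : 4 ∣ 12)]
    exact add_eq_left.2 rfl
  rcases r with (x | y | a) <;> rcases q with (_ | _ | _) <;>
    simp only [U, Triad.shiftThird]
  · rw [h4]
  · rw [← h4 (y - 4), sub_add_cancel]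

/-- `U·P = U·L` and `P·U = L·U`. -/
theorem UP_eq_UL : U * P = U * L ∧ P * U = L * U := by
  have hPU : P * U = L * U := by
    simp only [mul_eq_comp]
    exact (Relation.comp_eq_comp_of_surjective _ Triad.shiftThird_surjective
      L_iff_P_shiftThird U_shiftThird_iff).symm
  refine ⟨?_, hPU⟩
  simp only [mul_eq_comp] at hPU ⊢
  rw [← Std.Symm.flip_eq (r := U), ← Std.Symm.flip_eq (r := P), ← Std.Symm.flip_eq (r := L),
    ← Relation.flip_comp, ← Relation.flip_comp, hPU]

end CubeDance
end

section
/- Under relational composition on X one has U²·P·U² = P·U²·P·U²·P, where U² denotes U·U. -/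
namespace CubeDance

/-!
`P` is the graph of the involution `x_M ↔ x_m`, and `U²` is the equivalence relation whose
classes are the four hexatonic systems (the six consonant triads `U`-adjacent to one augmented
triad) together with the four augmented singletons. Hence `U²·P·U²` fixes augmented triads and
relates two consonant triads exactly when their hexatonic systems have indices of opposite
parity. Since `P` moves a consonant triad to a hexatonic system with index shifted by `±1`,
conjugation by `P` preserves this relation, and `P·U²·P·U²·P = P·(U²·P·U²)·P`.
-/

instance : Fintype Triad :=
  ⟨Finset.univ.image Triad.maj ∪ Finset.univ.image Triad.min ∪ Finset.univ.image Triad.aug,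
   by rintro (x | x | x) <;> simp⟩

instance : DecidableRel U := fun p q => by
  cases p <;> cases q <;> unfold U <;> infer_instance

def flipParity : ZMod 2 ⊕ ZMod 4 → ZMod 2 ⊕ ZMod 4 :=
  Sum.map (· + 1) id

lemma flipParity_injective : Function.Injective flipParity :=
  Sum.map_injective.2 ⟨add_left_injective 1, Function.injective_id⟩

namespace Triad

def parallel : Triad → Triad
  | maj x => min x
  | min x => maj x
  | aug a => aug a

@[simp]
lemma parallel_parallel (p : Triad) : p.parallel.parallel = p := by
  cases p <;> rfl

/-- `inl a` for a consonant triad in the hexatonic system of `a_aug`, `inr a` for `a_aug` itself. -/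
def hexClass : Triad → ZMod 4 ⊕ ZMod 4
  | maj x => .inl (x.val : ZMod 4)
  | min x => .inl ((x.val : ZMod 4) - 1)
  | aug a => .inr a

def hexParity (p : Triad) : ZMod 2 ⊕ ZMod 4 :=
  Sum.map (fun a => (a.val : ZMod 2)) id p.hexClass

lemma hexParity_parallel (p : Triad) :
    p.parallel.hexParity = flipParity p.hexParity := by
  revert p
  decide

end Triad

lemma mul_apply (R S : RelM) (p q : Triad) : (R * S) p q ↔ ∃ r, R p r ∧ S r q :=
  Iff.rfl

lemma P_iff (p q : Triad) : P p q ↔ q = p.parallel := by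
  cases p <;> cases q <;> simp [P, Triad.parallel, eq_comm]

lemma mul_P_iff (R : RelM) (p q : Triad) : (R * P) p q ↔ R p q.parallel := by
  simp only [mul_apply, P_iff]
  exact ⟨fun ⟨r, hr, hq⟩ => by rwa [hq, Triad.parallel_parallel],
    fun h => ⟨_, h, (Triad.parallel_parallel q).symm⟩⟩

lemma P_mul_iff (R : RelM) (p q : Triad) : (P * R) p q ↔ R p.parallel q := by
  simp only [mul_apply, P_iff, exists_eq_left]

lemma U_sq_iff (p q : Triad) : (U ^ 2) p q ↔ p.hexClass = q.hexClass := by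
  rw [pow_two, mul_apply]
  revert p q
  decide

lemma U_sq_mul_P_mul_U_sq_iff (p q : Triad) :
    (U ^ 2 * P * U ^ 2) p q ↔ q.hexParity = flipParity p.hexParity := by
  simp only [mul_apply (U ^ 2 * P), mul_P_iff, U_sq_iff]
  revert p q
  decide

/-- `U²·P·U² = P·U²·P·U²·P`. -/
theorem U2PU2 : U ^ 2 * P * U ^ 2 = P * U ^ 2 * P * U ^ 2 * P := by
  have conj : P * (U ^ 2 * P * U ^ 2) * P = U ^ 2 * P * U ^ 2 := by
    funext p q
    apply propext
    rw [mul_P_iff, P_mul_iff, U_sq_mul_P_mul_U_sq_iff, U_sq_mul_P_mul_U_sq_iff,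
      Triad.hexParity_parallel, Triad.hexParity_parallel, flipParity_injective.eq_iff]
  rw [← conj]
  simp only [mul_assoc]

end CubeDance
end

section
/- The monoid M_{U,P,L} is isomorphic to the monoid presented by three generators u, p, l subject to the relations p² = l² = 1, l·p·l = p·l·p, u³ = u, u·p = u·l, p·u = l·u, u²·p·u² = p·u²·p·u²·p, (u·p)²·u² = p·(u·p)²·u²·p, and u²·(p·u)² = p·u²·(p·u)²·p; that is, the quotient of the free monoid on three generators by the congruence generated by these relations is isomorphic as a monoid to M_{U,P,L}, via the map sending u, p, l to U, P, L respectively. -/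
namespace CubeDance

/-- The abstract generators `u`, `p`, `l` in the free monoid on three letters. -/
def u : FreeMonoid (Fin 3) := FreeMonoid.of 0
def p : FreeMonoid (Fin 3) := FreeMonoid.of 1
def l : FreeMonoid (Fin 3) := FreeMonoid.of 2

/-- The defining relations of the presentation of `M_{U,P,L}`. -/
def rels : FreeMonoid (Fin 3) → FreeMonoid (Fin 3) → Prop := fun a b =>
  (a = p * p ∧ b = 1) ∨
  (a = l * l ∧ b = 1) ∨
  (a = l * p * l ∧ b = p * l * p) ∨
  (a = u * u * u ∧ b = u) ∨
  (a = u * p ∧ b = u * l) ∨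
  (a = p * u ∧ b = l * u) ∨
  (a = u ^ 2 * p * u ^ 2 ∧ b = p * u ^ 2 * p * u ^ 2 * p) ∨
  (a = (u * p) ^ 2 * u ^ 2 ∧ b = p * (u * p) ^ 2 * u ^ 2 * p) ∨
  (a = u ^ 2 * (p * u) ^ 2 ∧ b = p * u ^ 2 * (p * u) ^ 2 * p)

/-- The monoid presented by `u`, `p`, `l` with the relations above, i.e. the quotient of
the free monoid on three generators by the congruence generated by the relations. -/
abbrev PresUPL := (conGen rels).Quotient

end CubeDance

/-!
Both sides of each relation act on the 28 triads as the same Boolean matrix, so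
`u, p, l ↦ U, P, L` induces a surjection from the presented monoid onto `M`. Knuth–Bendix
completion of the relations (shortlex, `u < p < l`) gives a complete rewriting system of 14 rules,
each derived from the relations by a short chain of rewrites. Left multiplication by a generator
followed by normalization maps its 40 irreducible words among themselves, so every word is
congruent to one of them; as these 40 words act as 40 distinct relations, the surjection is
injective.
-/

namespace FreeMonoid

variable {α : Type*} [DecidableEq α]

instance : DecidableEq (FreeMonoid α) := inferInstanceAs (DecidableEq (List α))

def rewritesAtHead (R : List (FreeMonoid α × FreeMonoid α)) (w : FreeMonoid α) :
    List (FreeMonoid α) :=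
  R.filterMap fun r =>
    if r.1.toList.isPrefixOf w.toList then some (r.2 * ofList (w.toList.drop r.1.length))
    else none

def rewrites (R : List (FreeMonoid α × FreeMonoid α)) (w : FreeMonoid α) :
    List (FreeMonoid α) :=
  w.recOn (rewritesAtHead R 1) fun a w ih => rewritesAtHead R (of a * w) ++ ih.map (of a * ·)

def normalize (R : List (FreeMonoid α × FreeMonoid α)) : ℕ → FreeMonoid α → FreeMonoid α
  | 0, w => w
  | n + 1, w =>
    match rewrites R w with
    | [] => w
    | v :: _ => normalize R n v

variable {R : List (FreeMonoid α × FreeMonoid α)} {c : Con (FreeMonoid α)}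

lemma _root_.Con.rel_of_mem_rewritesAtHead (hR : ∀ r ∈ R, c r.1 r.2) {w v : FreeMonoid α}
    (h : v ∈ rewritesAtHead R w) : c w v := by
  obtain ⟨r, hr, hv⟩ := List.mem_filterMap.1 h
  split_ifs at hv with hpre
  cases hv
  have hw : r.1 * ofList (w.toList.drop r.1.length) = w :=
    List.prefix_iff_eq_append.1 (List.isPrefixOf_iff_prefix.1 hpre)
  conv_lhs => rw [← hw]
  exact c.mul (hR r hr) (c.refl _)

lemma _root_.Con.rel_of_mem_rewrites (hR : ∀ r ∈ R, c r.1 r.2) {w v : FreeMonoid α}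
    (h : v ∈ rewrites R w) : c w v := by
  induction w using FreeMonoid.inductionOn' generalizing v with
  | one => exact c.rel_of_mem_rewritesAtHead hR h
  | of_mul a w ih =>
    rcases List.mem_append.1 h with h | h
    · exact c.rel_of_mem_rewritesAtHead hR h
    · obtain ⟨v, hv, rfl⟩ := List.mem_map.1 h
      exact c.mul (c.refl _) (ih hv)

lemma _root_.Con.rel_normalize (hR : ∀ r ∈ R, c r.1 r.2) (n : ℕ) (w : FreeMonoid α) :
    c w (normalize R n w) := by
  induction n generalizing w with
  | zero => exact c.refl w
  | succ n ih =>
    unfold normalize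
    split
    · exact c.refl w
    · next v _ h => exact c.trans (c.rel_of_mem_rewrites hR (h ▸ List.mem_cons_self)) (ih v)

lemma _root_.Con.rel_of_isChain (hR : ∀ r ∈ R, c r.1 r.2) {w v : FreeMonoid α}
    (ws : List (FreeMonoid α))
    (h : (w :: ws ++ [v]).IsChain fun x y => y ∈ rewrites R x ∨ x ∈ rewrites R y) :
    c w v := by
  have := List.relationReflTransGen_of_exists_isChain_cons (b := v) (ws ++ [v]) h (by simp)
  clear h
  induction this with
  | refl => exact c.refl w
  | tail _ hstep ih =>
    exact c.trans ih <|
      hstep.elim (c.rel_of_mem_rewrites hR) (c.symm <| c.rel_of_mem_rewrites hR ·)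

end FreeMonoid

section Transversal

variable {α N : Type*} [Monoid N] {c : Con (FreeMonoid α)} {T : Set (FreeMonoid α)}

lemma Con.exists_mem_rel (h1 : 1 ∈ T) (hT : ∀ t ∈ T, ∀ a, ∃ t' ∈ T, c (.of a * t) t')
    (w : FreeMonoid α) : ∃ t ∈ T, c w t := by
  induction w using FreeMonoid.inductionOn' with
  | one => exact ⟨1, h1, c.refl 1⟩
  | of_mul a w ih =>
    obtain ⟨t, ht, hwt⟩ := ih
    obtain ⟨t', ht', htt'⟩ := hT t ht a
    exact ⟨t', ht', c.trans (c.mul (c.refl _) hwt) htt'⟩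

lemma Con.lift_injective_of_injOn {f : FreeMonoid α →* N} (hc : c ≤ Con.ker f) (h1 : 1 ∈ T)
    (hT : ∀ t ∈ T, ∀ a, ∃ t' ∈ T, c (.of a * t) t') (hf : Set.InjOn f T) :
    Function.Injective (c.lift f hc) := by
  intro x y hxy
  induction x using Con.induction_on with | H v => ?_
  induction y using Con.induction_on with | H w => ?_
  obtain ⟨s, hs, hvs⟩ := c.exists_mem_rel h1 hT v
  obtain ⟨t, ht, hwt⟩ := c.exists_mem_rel h1 hT w
  rw [(c.eq).2 hvs, (c.eq).2 hwt] at hxy ⊢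
  rw [Con.lift_coe, Con.lift_coe] at hxy
  rw [hf hs ht hxy]

end Transversal

lemma Function.Injective.exists_mulEquiv_of_mrange_eq {A N : Type*} [Monoid A] [Monoid N]
    {f : A →* N} {S : Submonoid N} (hf : Function.Injective f) (hS : MonoidHom.mrange f = S) :
    ∃ e : A ≃* S, ∀ x, (e x : N) = f x := by
  subst hS
  exact ⟨.ofBijective f.mrangeRestrict ⟨fun x y h => hf (congrArg Subtype.val h),
    f.mrangeRestrict_surjective⟩, fun _ => rfl⟩

namespace CubeDance

def allTriads : List Triad :=
  (List.finRange 12).map .maj ++ (List.finRange 12).map .min ++ (List.finRange 4).map .aug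

lemma mem_allTriads (s : Triad) : s ∈ allTriads := by
  cases s <;> decide +revert

def uNbrs : Triad → List Triad
  | .maj x => [.aug (x.val : ZMod 4)]
  | .min x => [.aug ((x.val : ZMod 4) - 1)]
  | .aug a => (List.finRange 3).flatMap fun k =>
      [.maj (a.val + 4 * k.val : ℕ), .min (a.val + 1 + 4 * k.val : ℕ)]

def pNbrs : Triad → List Triad
  | .maj x => [.min x]
  | .min x => [.maj x]
  | .aug a => [.aug a]

def lNbrs : Triad → List Triad
  | .maj x => [.min (x + 4)]
  | .min x => [.maj (x - 4)]
  | .aug a => [.aug a]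

lemma U_iff (s t : Triad) : U s t ↔ t ∈ uNbrs s := by
  cases s <;> cases t <;> simp only [U, uNbrs] <;> decide +revert

lemma P_iff_s6 (s t : Triad) : P s t ↔ t ∈ pNbrs s := by
  cases s <;> cases t <;> simp only [P, pNbrs] <;> decide +revert

lemma L_iff (s t : Triad) : L s t ↔ t ∈ lNbrs s := by
  cases s <;> cases t <;> simp only [L, lNbrs] <;> decide +revert

def gens : Fin 3 → RelM := ![U, P, L]

def nbrs : Fin 3 → Triad → List Triad := ![uNbrs, pNbrs, lNbrs]

lemma gens_iff (a : Fin 3) (s t : Triad) : gens a s t ↔ t ∈ nbrs a s := by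
  fin_cases a
  exacts [U_iff s t, P_iff_s6 s t, L_iff s t]

def eval : FreeMonoid (Fin 3) →* RelM := FreeMonoid.lift gens

def relImage (w : FreeMonoid (Fin 3)) : List Triad → List Triad :=
  w.recOn id fun a _ ih S => ih (S.flatMap (nbrs a)).dedup

lemma mem_relImage (w : FreeMonoid (Fin 3)) (S : List Triad) (t : Triad) :
    t ∈ relImage w S ↔ ∃ s ∈ S, eval w s t := by
  induction w using FreeMonoid.inductionOn' generalizing S with
  | one =>
    rw [map_one]
    exact ⟨fun h => ⟨t, h, rfl⟩, fun ⟨s, hs, hst⟩ => hst ▸ hs⟩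
  | of_mul a w ih =>
    rw [eval, map_mul, FreeMonoid.lift_eval_of]
    change t ∈ relImage w (S.flatMap (nbrs a)).dedup ↔
      ∃ s ∈ S, ∃ r, gens a s r ∧ eval w r t
    simp only [ih, List.mem_dedup, List.mem_flatMap, ← gens_iff]
    aesop

def relRow (w : FreeMonoid (Fin 3)) (s : Triad) : List Triad :=
  allTriads.filter (· ∈ relImage w [s])

lemma mem_relRow {w : FreeMonoid (Fin 3)} {s t : Triad} : t ∈ relRow w s ↔ eval w s t := by
  rw [relRow, List.mem_filter, decide_eq_true_iff, mem_relImage]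
  simp [mem_allTriads]

def relMatrix (w : FreeMonoid (Fin 3)) : List (List Triad) :=
  allTriads.map (relRow w)

lemma eval_eq_iff (v w : FreeMonoid (Fin 3)) : eval v = eval w ↔ relMatrix v = relMatrix w := by
  rw [relMatrix, relMatrix, List.map_inj_left]
  constructor
  · intro h s _
    exact List.filter_congr fun t _ => decide_eq_decide.2 (by rw [mem_relImage, mem_relImage, h])
  · intro h
    ext s t
    rw [← mem_relRow, ← mem_relRow, h s (mem_allTriads s)]

def relationList : List (FreeMonoid (Fin 3) × FreeMonoid (Fin 3)) :=
  [(p * p, 1), (l * l, 1), (l * p * l, p * l * p), (u * u * u, u), (u * p, u * l), (p * u, l * u),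
    (u ^ 2 * p * u ^ 2, p * u ^ 2 * p * u ^ 2 * p),
    ((u * p) ^ 2 * u ^ 2, p * (u * p) ^ 2 * u ^ 2 * p),
    (u ^ 2 * (p * u) ^ 2, p * u ^ 2 * (p * u) ^ 2 * p)]

lemma rels_iff_mem_relationList {v w : FreeMonoid (Fin 3)} :
    rels v w ↔ (v, w) ∈ relationList := by
  simp [rels, relationList]

lemma relMatrix_relationList : ∀ r ∈ relationList, relMatrix r.1 = relMatrix r.2 := by
  decide +kernel

lemma conGen_rels_le_ker_eval : conGen rels ≤ Con.ker eval :=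
  Con.conGen_le.2 fun _ _ h =>
    (eval_eq_iff _ _).2 (relMatrix_relationList _ (rels_iff_mem_relationList.1 h))

lemma conGen_rels_of_mem_relationList : ∀ r ∈ relationList, conGen rels r.1 r.2 :=
  fun _ hr => ConGen.Rel.of _ _ (rels_iff_mem_relationList.2 hr)

def completeRules : List (FreeMonoid (Fin 3) × FreeMonoid (Fin 3)) :=
  [(u * l, u * p), (p * p, 1), (l * u, p * u), (l * l, 1), (u * u * u, u), (u * p * l, u),
    (l * p * u, u), (l * p * l, p * l * p),
    (u * p * u * p * u * u, u * u * p * u * p * u),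
    (p * u * u * p * u * u, u * u * p * u * u * p),
    (u * u * p * u * u * p * u, p * u * u * p * u),
    (p * u * u * p * u * p * u, u * u * p * u * p * u * p),
    (u * u * p * u * p * u * p * u, p * u * p * u * p * u),
    (p * u * p * u * p * u * p * u, u * p * u * p * u * p * u * p)]

lemma conGen_rels_of_mem_completeRules : ∀ r ∈ completeRules, conGen rels r.1 r.2 := by
  have derive {v w : FreeMonoid (Fin 3)} :=
    (conGen rels).rel_of_isChain (w := v) (v := w) conGen_rels_of_mem_relationList
  simp only [completeRules, List.forall_mem_cons, List.not_mem_nil, IsEmpty.forall_iff,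
    implies_true, and_true]
  refine ⟨derive [] (by decide), derive [] (by decide), derive [] (by decide),
    derive [] (by decide), derive [] (by decide), derive [u * l * l] (by decide),
    derive [l * l * u] (by decide), derive [] (by decide), ?_, ?_, ?_, ?_, ?_, ?_⟩
  · exact derive [p * u * p * u * p * u * u * p, p * u * u * u * p * u * p * u * u * p,
      p * u * u * p * u * p * u * p * u * u * p * p, p * u * u * p * u * p * u * p * u * u,
      u * u * p * u * p * u * u * u] (by decide)
  · exact derive [p * p * u * u * p * u * u * p] (by decide)
  · exact derive [p * u * u * p * u * u * p * p * u, p * u * u * p * u * u * u] (by decide)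
  · exact derive [p * p * u * u * p * u * p * u * p] (by decide)
  · exact derive [u * u * p * u * p * u * u * u * p * u,
      p * u * u * p * u * p * u * p * u * u * p * u, p * u * u * u * p * u * p * u * u * u,
      p * u * p * u * p * u * u * u] (by decide)
  · exact derive [p * u * p * u * u * u * p * u * p * u,
      p * u * p * u * p * u * u * p * u * p * u * p, u * p * u * p * u * u * u * p * u * p]
      (by decide)

def normalForms : List (FreeMonoid (Fin 3)) :=
  [1, u, p, l, u * u, u * p, p * u, p * l, l * p, u * u * p, u * p * u, p * u * u, p * u * p,
    p * l * p, u * u * p * u, u * p * u * u, u * p * u * p, p * u * u * p, p * u * p * u,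
    u * u * p * u * u, u * u * p * u * p, u * p * u * u * p, u * p * u * p * u, p * u * u * p * u,
    p * u * p * u * u, p * u * p * u * p, u * u * p * u * u * p, u * u * p * u * p * u,
    u * p * u * u * p * u, u * p * u * p * u * p, p * u * u * p * u * p, p * u * p * u * u * p,
    p * u * p * u * p * u, u * u * p * u * p * u * p, u * p * u * u * p * u * p,
    u * p * u * p * u * p * u, p * u * p * u * u * p * u, p * u * p * u * p * u * p,
    u * p * u * p * u * p * u * p, p * u * p * u * u * p * u * p]

lemma normalize_mem_normalForms : ∀ w ∈ normalForms, ∀ a : Fin 3,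
    FreeMonoid.normalize completeRules 10 (.of a * w) ∈ normalForms := by
  decide

lemma relMatrix_nodup : (normalForms.map relMatrix).Nodup := by
  decide +kernel

lemma lift_eval_injective :
    Function.Injective ((conGen rels).lift eval conGen_rels_le_ker_eval) :=
  Con.lift_injective_of_injOn conGen_rels_le_ker_eval (T := {w | w ∈ normalForms})
    List.mem_cons_self
    (fun t ht a => ⟨_, normalize_mem_normalForms t ht a,
      (conGen rels).rel_normalize conGen_rels_of_mem_completeRules 10 _⟩)
    (fun v hv w hw h => List.inj_on_of_nodup_map relMatrix_nodup hv hw ((eval_eq_iff v w).1 h))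

lemma mrange_lift_eval :
    MonoidHom.mrange ((conGen rels).lift eval conGen_rels_le_ker_eval) = M := by
  rw [Con.lift_range, eval, FreeMonoid.mrange_lift, gens, Matrix.range_cons, Matrix.range_cons,
    Matrix.range_cons, Matrix.range_empty]
  simp only [Set.union_empty, Set.singleton_union]
  rfl

/-- `M_{U,P,L}` is isomorphic to the presented monoid, via `u ↦ U`, `p ↦ P`, `l ↦ L`. -/
theorem presentation_of_M :
    ∃ e : PresUPL ≃* M,
      (↑(e ((conGen rels).mk' u)) : RelM) = U ∧
      (↑(e ((conGen rels).mk' p)) : RelM) = P ∧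
      (↑(e ((conGen rels).mk' l)) : RelM) = L := by
  obtain ⟨e, he⟩ := lift_eval_injective.exists_mulEquiv_of_mrange_eq mrange_lift_eval
  exact ⟨e, he _, he _, he _⟩

end CubeDance
end

section
/- The submonoid of M_{U,P,L} generated by the two relations P and L is a group of order 6 isomorphic to the dihedral group of order 6 (equivalently, to the symmetric group S₃). -/
namespace DihedralGroup

lemma mclosure_sr_zero_sr_one_eq_top (n : ℕ) [NeZero n] :
    Submonoid.closure {sr 0, sr 1} = (⊤ : Submonoid (DihedralGroup n)) := by
  refine eq_top_iff.2 fun g _ => ?_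
  have hs0 : (sr 0 : DihedralGroup n) ∈ Submonoid.closure {sr 0, sr 1} :=
    Submonoid.subset_closure (Set.mem_insert _ _)
  have hs1 : (sr 1 : DihedralGroup n) ∈ Submonoid.closure {sr 0, sr 1} :=
    Submonoid.subset_closure (Set.mem_insert_of_mem _ (Set.mem_singleton _))
  have hr1 : (r 1 : DihedralGroup n) ∈ Submonoid.closure {sr 0, sr 1} := by
    simpa only [sr_mul_sr, sub_zero] using mul_mem hs0 hs1
  have hr (i : ZMod n) : r i ∈ Submonoid.closure {sr 0, sr 1} := by
    rw [← ZMod.natCast_zmod_val i, ← r_one_pow]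
    exact pow_mem hr1 _
  rcases g with i | i
  · exact hr i
  · rw [← zero_add i, ← sr_mul_r]
    exact mul_mem hs0 (hr i)

end DihedralGroup

namespace CubeDance

/-- Orienting the graph as `p = g • q` (not `g • p = q`) makes relational composition match the
product of `G` rather than of `Gᵐᵒᵖ`. -/
def relOfAction (G : Type*) [Monoid G] [MulAction G Triad] : G →* RelM where
  toFun g p q := p = g • q
  map_one' := by
    funext p q
    show (p = (1 : G) • q) = (p = q)
    rw [one_smul]
  map_mul' g h := by
    funext p q
    exact propext ⟨fun hp => ⟨h • q, hp.trans (mul_smul g h q), rfl⟩,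
      fun ⟨_, hp, hr⟩ => hp.trans (hr ▸ (mul_smul g h q).symm)⟩

lemma relOfAction_injective (G : Type*) [Monoid G] [MulAction G Triad] [FaithfulSMul G Triad] :
    Function.Injective (relOfAction G) := fun g _ hgh =>
  eq_of_smul_eq_smul fun q => (congrFun (congrFun hgh (g • q)) q).mp rfl

def thirdShift : ZMod 3 →+ ZMod 12 := AddMonoidHom.mk' (fun i => 4 * i.val) (by decide)

lemma thirdShift_injective : Function.Injective thirdShift :=
  (injective_iff_map_eq_zero thirdShift).2 (by decide)

lemma thirdShift_one : thirdShift 1 = 4 := rfl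

def dihedralSMul : DihedralGroup 3 → Triad → Triad
  | .r i, .maj x => .maj (x + thirdShift i)
  | .r i, .min x => .min (x - thirdShift i)
  | .sr i, .maj x => .min (x + thirdShift i)
  | .sr i, .min x => .maj (x - thirdShift i)
  | _, .aug a => .aug a

instance : MulAction (DihedralGroup 3) Triad where
  smul := dihedralSMul
  one_smul p := by
    show dihedralSMul (.r 0) p = p
    cases p <;> simp [dihedralSMul]
  mul_smul g h p := by
    show dihedralSMul (g * h) p = dihedralSMul g (dihedralSMul h p)
    cases g <;> cases h <;> cases p <;>
      simp only [dihedralSMul, DihedralGroup.r_mul_r, DihedralGroup.r_mul_sr,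
        DihedralGroup.sr_mul_r, DihedralGroup.sr_mul_sr, map_add, map_sub, Triad.maj.injEq,
        Triad.min.injEq] <;> abel

lemma smul_eq_dihedralSMul (g : DihedralGroup 3) (p : Triad) : g • p = dihedralSMul g p := rfl

instance : FaithfulSMul (DihedralGroup 3) Triad where
  eq_of_smul_eq_smul {g h} hgh := by
    have h0 := hgh (.maj 0)
    cases g <;> cases h <;>
      simp only [smul_eq_dihedralSMul, dihedralSMul, zero_add, Triad.maj.injEq, Triad.min.injEq,
        reduceCtorEq] at h0 <;>
      rw [thirdShift_injective h0]

lemma relOfAction_sr_zero : relOfAction (DihedralGroup 3) (.sr 0) = P := by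
  funext p q
  cases p <;> cases q <;> simp [relOfAction, smul_eq_dihedralSMul, dihedralSMul, P]

lemma relOfAction_sr_one : relOfAction (DihedralGroup 3) (.sr 1) = L := by
  funext p q
  cases p <;> cases q <;>
    simp [relOfAction, smul_eq_dihedralSMul, dihedralSMul, L, thirdShift_one, eq_sub_iff_add_eq,
      eq_comm]

lemma mrange_relOfAction :
    MonoidHom.mrange (relOfAction (DihedralGroup 3)) = Submonoid.closure {P, L} := by
  rw [MonoidHom.mrange_eq_map, ← DihedralGroup.mclosure_sr_zero_sr_one_eq_top,
    MonoidHom.map_mclosure, Set.image_pair, relOfAction_sr_zero, relOfAction_sr_one]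

/-- The submonoid generated by `P` and `L` is a group of order 6 isomorphic to the
dihedral group of order 6 (equivalently, the symmetric group `S₃`). -/
theorem PL_submonoid_dihedral :
    Nat.card (Submonoid.closure {P, L} : Submonoid RelM) = 6 ∧
    Nonempty ((Submonoid.closure {P, L} : Submonoid RelM) ≃* DihedralGroup 3) := by
  let e : DihedralGroup 3 ≃* Submonoid.closure {P, L} :=
    (MulEquiv.ofLeftInverse' _ (Function.leftInverse_invFun (relOfAction_injective _))).trans
      (MulEquiv.submonoidCongr mrange_relOfAction)
  exact ⟨(Nat.card_congr e.toEquiv).symm.trans DihedralGroup.nat_card, ⟨e.symm⟩⟩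

end CubeDance
end

section
/- Every monoid automorphism N of M_{U,P,L} maps the submonoid generated by {P, L} bijectively onto itself; that is, N restricts to an automorphism of the subgroup generated by P and L. -/
namespace CubeDance

/-- The subgroup of `M_{U,P,L}` generated by `P` and `L`, as a submonoid of `M`. -/
def PLsub : Submonoid M :=
  Submonoid.closure {(⟨P, P_mem⟩ : M), (⟨L, L_mem⟩ : M)}

/-!
`PLsub` is the group of units of `M`, and automorphisms preserve units. `P` and `L` are
involutions, so they generate units. Conversely, `U` relates both `0_M` and `4_M` to `0_aug`, so it
is not left unique, and this defect survives multiplication on the right by any element of `M`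
(all of which are left total) and on the left by any invertible relation. Hence every element of
`M` outside the closure of `{P, L}` fails to be left unique, whereas invertible relations are left
unique.
-/

open Relator

@[simp] lemma one_apply (p q : Triad) : (1 : RelM) p q ↔ p = q := Iff.rfl

lemma isUnit_of_mul_self_eq_one {α : Type*} [Monoid α] {a : α} (h : a * a = 1) : IsUnit a :=
  isUnit_iff_exists.2 ⟨a, h, h⟩

section Relations

variable {R S : RelM}

def leftTotalSubmonoid : Submonoid RelM where
  carrier := {R | LeftTotal R}
  one_mem' p := ⟨p, rfl⟩
  mul_mem' {R S} hR hS p := by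
    obtain ⟨q, hpq⟩ := hR p
    obtain ⟨r, hqr⟩ := hS q
    exact ⟨r, q, hpq, hqr⟩

lemma leftUnique_mul (hR : LeftUnique R) (hS : LeftUnique S) : LeftUnique (R * S) := by
  rintro p p' r ⟨q, hpq, hqr⟩ ⟨q', hpq', hqr'⟩
  obtain rfl := hS hqr hqr'
  exact hR hpq hpq'

lemma leftUnique_of_mul_of_leftTotal (h : LeftUnique (R * S)) (hS : LeftTotal S) :
    LeftUnique R := by
  intro p p' q hpq hpq'
  obtain ⟨r, hqr⟩ := hS q
  exact h ⟨q, hpq, hqr⟩ ⟨q, hpq', hqr⟩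

lemma leftUnique_of_isUnit (hR : IsUnit R) : LeftUnique R := by
  obtain ⟨u, rfl⟩ := hR
  intro p p' q hpq hpq'
  obtain ⟨r, hqr, -⟩ : (↑u⁻¹ * ↑u : RelM) q q := by rw [u.inv_mul]; rfl
  have hp : (↑u * ↑u⁻¹ : RelM) p r := ⟨q, hpq, hqr⟩
  have hp' : (↑u * ↑u⁻¹ : RelM) p' r := ⟨q, hpq', hqr⟩
  rw [u.mul_inv, one_apply] at hp hp'
  rw [hp, hp']

lemma leftUnique_of_isUnit_mul (hR : IsUnit R) (h : LeftUnique (R * S)) : LeftUnique S := by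
  obtain ⟨u, rfl⟩ := hR
  simpa [← mul_assoc] using leftUnique_mul (leftUnique_of_isUnit (u⁻¹).isUnit) h

end Relations

lemma P_mul_P : P * P = 1 := by
  funext p q
  apply propext
  constructor
  · rintro ⟨r, hpr, hrq⟩
    cases p <;> cases r <;> cases q <;> simp_all [P]
  · rintro rfl
    cases p with
    | maj x => exact ⟨.min x, rfl, rfl⟩
    | min x => exact ⟨.maj x, rfl, rfl⟩
    | aug a => exact ⟨.aug a, rfl, rfl⟩

lemma L_mul_L : L * L = 1 := by
  funext p q
  apply propext
  constructor
  · rintro ⟨r, hpr, hrq⟩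
    cases p <;> cases r <;> cases q <;> simp_all [L]
  · rintro rfl
    cases p with
    | maj x => exact ⟨.min (x + 4), rfl, rfl⟩
    | min x => exact ⟨.maj (x - 4), (sub_add_cancel x 4).symm, (sub_add_cancel x 4).symm⟩
    | aug a => exact ⟨.aug a, rfl, rfl⟩

lemma not_leftUnique_U : ¬ LeftUnique U := fun h =>
  absurd (@h (.maj 0) (.maj 4) (.aug 0) (by unfold U; decide) (by unfold U; decide)) (by decide)

lemma leftTotal_U : LeftTotal U
  | .maj x => ⟨.aug (x.val : ZMod 4), rfl⟩
  | .min x => ⟨.aug ((x.val : ZMod 4) - 1), (sub_add_cancel _ _).symm⟩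
  | .aug a => ⟨.maj (a.val : ZMod 12), by unfold U; revert a; decide⟩

lemma leftTotal_P : LeftTotal P
  | .maj x => ⟨.min x, rfl⟩
  | .min x => ⟨.maj x, rfl⟩
  | .aug a => ⟨.aug a, rfl⟩

lemma leftTotal_L : LeftTotal L
  | .maj x => ⟨.min (x + 4), rfl⟩
  | .min x => ⟨.maj (x - 4), (sub_add_cancel x 4).symm⟩
  | .aug a => ⟨.aug a, rfl⟩

lemma M_le_leftTotalSubmonoid : M ≤ leftTotalSubmonoid := by
  rw [M, Submonoid.closure_le]
  rintro R (rfl | rfl | rfl)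
  exacts [leftTotal_U, leftTotal_P, leftTotal_L]

lemma closure_PL_le_isUnit : Submonoid.closure {P, L} ≤ IsUnit.submonoid RelM := by
  rw [Submonoid.closure_le]
  rintro R (rfl | rfl)
  exacts [isUnit_of_mul_self_eq_one P_mul_P, isUnit_of_mul_self_eq_one L_mul_L]

lemma mem_closure_PL_or_not_leftUnique {R : RelM} (hR : R ∈ M) :
    R ∈ Submonoid.closure {P, L} ∨ ¬ LeftUnique R := by
  induction hR using Submonoid.closure_induction with
  | mem R hR =>
    rcases hR with rfl | rfl | rfl
    · exact .inr not_leftUnique_U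
    · exact .inl (Submonoid.subset_closure (by simp))
    · exact .inl (Submonoid.subset_closure (by simp))
  | one => exact .inl (one_mem _)
  | mul R S _ hSM ihR ihS =>
    rcases ihR with hR | hR
    · rcases ihS with hS | hS
      · exact .inl (mul_mem hR hS)
      · exact .inr fun h => hS (leftUnique_of_isUnit_mul (closure_PL_le_isUnit hR) h)
    · exact .inr fun h => hR (leftUnique_of_mul_of_leftTotal h (M_le_leftTotalSubmonoid hSM))

lemma PLsub_eq_isUnit_submonoid : PLsub = IsUnit.submonoid M := by
  apply le_antisymm
  · rw [PLsub, Submonoid.closure_le]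
    rintro x (rfl | rfl)
    exacts [isUnit_of_mul_self_eq_one (Subtype.ext P_mul_P),
      isUnit_of_mul_self_eq_one (Subtype.ext L_mul_L)]
  · intro x hx
    have hPL := (mem_closure_PL_or_not_leftUnique x.2).resolve_right
      (not_not.2 (leftUnique_of_isUnit (hx.map M.subtype)))
    rw [← Submonoid.mem_map_iff_mem M.subtype_injective, PLsub, MonoidHom.map_mclosure]
    simpa [Set.image_insert_eq] using hPL

/-- Every monoid automorphism of `M_{U,P,L}` maps the submonoid generated by `{P, L}`
bijectively onto itself. -/
theorem aut_preserves_PL (N : MulAut M) :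
    PLsub.map N.toMonoidHom = PLsub := by
  ext x
  rw [Submonoid.mem_map_equiv, PLsub_eq_isUnit_submonoid, IsUnit.mem_submonoid_iff,
    IsUnit.mem_submonoid_iff, MulEquiv.isUnit_map]

end CubeDance
end

section
/- The subgroup of Aut(S) consisting of pairs (N, ν) with N the identity automorphism of M and ν fixing each of the four augmented triads is isomorphic to (Z/3)⁴; in particular it has order 81. -/
namespace CubeDance

/-- The compatibility condition defining `Aut(S)`: a pair `(N, ν)` of a monoid automorphism
of `M` and a permutation of `X` such that `p R q` implies `ν(p) N(R) ν(q)` for every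
`R ∈ M` and all `p, q ∈ X`. -/
def compat (x : MulAut M × Equiv.Perm Triad) : Prop :=
  ∀ R : M, ∀ pt q : Triad, (↑R : RelM) pt q → (↑(x.1 R) : RelM) (x.2 pt) (x.2 q)

/-!
An element of the kernel is a permutation `ν` of the triads that preserves `U`, `P` and `L` and
fixes the augmented triads. Preserving `U` and `P` forces `ν` to send `x_M` to `y_M` and `x_m` to
`y_m` for one root `y ≡ x (mod 4)`; preserving `L` then says that this root map commutes with
`x ↦ x + 4`. Such a root map translates each residue class mod 4 by its own element of
`{0, 4, 8} ≅ ℤ/3`, and conversely each of these `3⁴` translations preserves the three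
generators, hence all of `M`.
-/

theorem ZMod.induction_add_natCast {n m : ℕ} [NeZero n] (hm : 0 < m) {C : ZMod n → Prop}
    (base : ∀ i < m, C i) (step : ∀ z, C z → C (z + m)) (z : ZMod n) : C z := by
  obtain ⟨k, rfl⟩ : ∃ k : ℕ, (k : ZMod n) = z := ⟨z.val, ZMod.natCast_zmod_val z⟩
  induction k using Nat.strong_induction_on with
  | _ k ih =>
    rcases lt_or_ge k m with hk | hk
    · exact base k hk
    · have := step _ (ih (k - m) (by omega))
      rwa [← Nat.cast_add, Nat.sub_add_cancel hk] at this

def fourMul : ZMod 3 →+ ZMod 12 where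
  toFun k := 4 * k.val
  map_zero' := rfl
  map_add' := by decide

lemma fourMul_injective : Function.Injective fourMul := by decide

lemma natCast_val_add_fourMul (x : ZMod 12) (k : ZMod 3) :
    ((x + fourMul k).val : ZMod 4) = x.val := by
  revert x k; decide

lemma exists_eq_add_fourMul {x y : ZMod 12} (h : (x.val : ZMod 4) = y.val) :
    ∃ k, x = y + fourMul k := by
  revert x y; decide

def rootShift (s : ZMod 4 → ZMod 3) (x : ZMod 12) : ZMod 12 := x + fourMul (s x.val)

section rootShift

variable (s t : ZMod 4 → ZMod 3) (x : ZMod 12)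

lemma natCast_val_rootShift : ((rootShift s x).val : ZMod 4) = x.val :=
  natCast_val_add_fourMul _ _

lemma rootShift_add_four : rootShift s (x + 4) = rootShift s x + 4 := by
  have hres : ((x + 4).val : ZMod 4) = x.val := by revert x; decide
  rw [rootShift, rootShift, hres, add_right_comm]

lemma rootShift_natCast_val (a : ZMod 4) :
    rootShift s (a.val : ZMod 12) = a.val + fourMul (s a) := by
  have hres : ((a.val : ZMod 12).val : ZMod 4) = a := by revert a; decide
  rw [rootShift, hres]

lemma rootShift_zero : rootShift 0 x = x := by
  simp [rootShift]

lemma rootShift_add : rootShift (s + t) x = rootShift s (rootShift t x) := by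
  rw [rootShift, rootShift, rootShift, natCast_val_add_fourMul, Pi.add_apply, map_add,
    add_assoc, add_comm (fourMul _)]

end rootShift

def Triad.shift (s : ZMod 4 → ZMod 3) : Triad → Triad
  | .maj x => .maj (rootShift s x)
  | .min x => .min (rootShift s x)
  | .aug a => .aug a

instance : AddAction (ZMod 4 → ZMod 3) Triad where
  vadd := Triad.shift
  zero_vadd t := by
    change Triad.shift 0 t = t
    cases t <;> simp only [Triad.shift, rootShift_zero]
  add_vadd s t u := by
    change Triad.shift (s + t) u = Triad.shift s (Triad.shift t u)
    cases u <;> simp only [Triad.shift, rootShift_add]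

section vadd

variable (s : ZMod 4 → ZMod 3)

@[simp] lemma vadd_maj (x : ZMod 12) : s +ᵥ Triad.maj x = .maj (rootShift s x) := rfl

@[simp] lemma vadd_min (x : ZMod 12) : s +ᵥ Triad.min x = .min (rootShift s x) := rfl

@[simp] lemma vadd_aug (a : ZMod 4) : s +ᵥ Triad.aug a = .aug a := rfl

end vadd

def preservedBy (ν : Triad → Triad) : Submonoid RelM where
  carrier := {R | ∀ p q, R p q → R (ν p) (ν q)}
  one_mem' _ _ h := congrArg ν h
  mul_mem' hR hS _ _ := fun ⟨r, hpr, hrq⟩ => ⟨ν r, hR _ _ hpr, hS _ _ hrq⟩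

lemma M_le_preservedBy {ν : Triad → Triad} (hU : U ∈ preservedBy ν) (hP : P ∈ preservedBy ν)
    (hL : L ∈ preservedBy ν) : M ≤ preservedBy ν :=
  Submonoid.closure_le.2 (by simp [Set.insert_subset_iff, hU, hP, hL])

lemma compat_one_iff {ν : Equiv.Perm Triad} : compat (1, ν) ↔ M ≤ preservedBy ν :=
  ⟨fun h R hR => h ⟨R, hR⟩, fun h R => h R.2⟩

lemma M_le_preservedBy_vadd (s : ZMod 4 → ZMod 3) : M ≤ preservedBy (s +ᵥ ·) := by
  refine M_le_preservedBy ?_ ?_ ?_ <;> intro p q h <;> cases p <;> cases q <;>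
    simp_all [U, P, L, natCast_val_rootShift, rootShift_add_four, -ZMod.natCast_val]

lemma exists_rootShift_eq {h : ZMod 12 → ZMod 12} (h_add_four : ∀ z, h (z + 4) = h z + 4)
    (h_res : ∀ z, ((h z).val : ZMod 4) = z.val) : ∃ s, h = rootShift s := by
  choose s hs using fun a : ZMod 4 => exists_eq_add_fourMul (h_res (a.val : ZMod 12))
  refine ⟨s, funext (ZMod.induction_add_natCast four_pos ?_ ?_)⟩
  · intro i hi
    have hval : ((i : ZMod 4).val : ZMod 12) = i := by rw [ZMod.val_cast_of_lt hi]
    rw [← hval, hs, rootShift_natCast_val]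
  · intro z hz
    rw [Nat.cast_ofNat, h_add_four, hz, rootShift_add_four]

lemma exists_maj_min_image {ν : Triad → Triad} (hU : U ∈ preservedBy ν) (hP : P ∈ preservedBy ν)
    (haug : ∀ a, ν (.aug a) = .aug a) (z : ZMod 12) :
    ∃ y : ZMod 12, ν (.maj z) = .maj y ∧ ν (.min z) = .min y ∧ (y.val : ZMod 4) = z.val := by
  have h_maj := hU (.aug z.val) (.maj z) rfl
  have h_min := hU (.min z) (.aug (z.val - 1)) (sub_add_cancel _ _).symm
  have h_P := hP (.maj z) (.min z) rfl
  rw [haug] at h_maj h_min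
  generalize ν (.maj z) = m at *
  generalize ν (.min z) = n at *
  cases m <;> cases n <;> simp only [U, P] at h_maj h_min h_P
  case maj.min y w => exact ⟨y, rfl, h_P ▸ rfl, h_maj⟩
  case min.maj y w =>
    subst h_P
    have : (1 : ZMod 4) = -1 := by linear_combination h_maj.symm.trans h_min
    exact absurd this (by decide)

lemma exists_vadd_eq {ν : Triad → Triad} (hU : U ∈ preservedBy ν) (hP : P ∈ preservedBy ν)
    (hL : L ∈ preservedBy ν) (haug : ∀ a, ν (.aug a) = .aug a) :
    ∃ s : ZMod 4 → ZMod 3, ∀ t, s +ᵥ t = ν t := by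
  choose h h_maj h_min h_res using exists_maj_min_image hU hP haug
  have h_add_four (z : ZMod 12) : h (z + 4) = h z + 4 := by
    simpa only [L, h_maj, h_min] using hL (.maj z) (.min (z + 4)) rfl
  obtain ⟨s, rfl⟩ := exists_rootShift_eq h_add_four h_res
  exact ⟨s, fun | .maj z => (h_maj z).symm | .min z => (h_min z).symm | .aug a => (haug a).symm⟩

def shiftHom : Multiplicative (ZMod 4 → ZMod 3) →* MulAut M × Equiv.Perm Triad :=
  (MonoidHom.inr _ _).comp (MulAction.toPermHom _ _)

lemma shiftHom_injective : Function.Injective shiftHom := by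
  intro s t hst
  funext a
  have : s.toAdd +ᵥ Triad.maj (a.val : ZMod 12) = t.toAdd +ᵥ Triad.maj (a.val : ZMod 12) :=
    congrArg (fun x => x.2 (.maj (a.val : ZMod 12))) hst
  rw [vadd_maj, vadd_maj, rootShift_natCast_val, rootShift_natCast_val, Triad.maj.injEq,
    add_right_inj] at this
  exact fourMul_injective this

lemma mem_range_shiftHom_iff (x : MulAut M × Equiv.Perm Triad) : x ∈ shiftHom.range ↔
    compat x ∧ x.1 = 1 ∧ ∀ a : ZMod 4, x.2 (Triad.aug a) = Triad.aug a := by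
  constructor
  · rintro ⟨s, rfl⟩
    exact ⟨compat_one_iff.2 (M_le_preservedBy_vadd s.toAdd), rfl, fun _ => rfl⟩
  · obtain ⟨N, ν⟩ := x
    rintro ⟨hc, rfl : N = 1, haug⟩
    have hM := compat_one_iff.1 hc
    obtain ⟨s, hs⟩ := exists_vadd_eq (hM U_mem) (hM P_mem) (hM L_mem) haug
    exact ⟨.ofAdd s, Prod.ext rfl (Equiv.ext hs)⟩

/-- The subgroup of `Aut(S)` of pairs `(N, ν)` with `N` the identity and `ν` fixing
each augmented triad is isomorphic to `(ℤ₃)⁴`; in particular it has order 81. -/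
theorem autS_kernel_structure :
    ∃ K : Subgroup (MulAut M × Equiv.Perm Triad),
      (∀ x, x ∈ K ↔
        (compat x ∧ x.1 = 1 ∧ ∀ a : ZMod 4, x.2 (Triad.aug a) = Triad.aug a)) ∧
      Nat.card K = 81 ∧ Nonempty (K ≃* Multiplicative (Fin 4 → ZMod 3)) := by
  let e := (MonoidHom.ofInjective shiftHom_injective).symm
  refine ⟨shiftHom.range, mem_range_shiftHom_iff, ?_, ⟨e⟩⟩
  rw [Nat.card_congr e.toEquiv]
  simp

end CubeDance
end
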